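/- Let π : V(𝓛) → V(𝓢) be a fibration between graphs. Assume that 𝓢 is one-ended and that for every finite subset F of V(𝓢) there is a vertex u of 𝓢 such that any two vertices of π⁻¹({u}) can be joined in 𝓛 by a path that never meets π⁻¹(F). Then for every finite subset F of V(𝓢), denoting by K the infinite connected component of the complement of F in 𝓢, the subgraph of 𝓛 induced on π⁻¹(K) is connected. -/

import Mathlib

open MeasureTheory Set
open scoped ENNReal

namespace PercPaper

/-! ### The Bernoulli(p) product measure on `ι → Bool`

We realize the Bernoulli product measure as the pushforward of the uniform
measure on `[0,1)` under the standard digit-interleaving construction: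
the binary digits of a uniform point of `[0,1)` are i.i.d. fair coins; by
interleaving (via the pairing function `Nat.pair`) we extract countably many
independent uniform random variables, and thresholding each at `p` produces
i.i.d. Bernoulli(`p`) bits. -/

/-- The `k`-th binary digit of a real number `x ∈ [0,1)`. -/
noncomputable def digit (k : ℕ) (x : ℝ) : Bool :=
  decide (⌊x * 2 ^ (k + 1)⌋ % 2 = 1)

/-- The `i`-th of countably many independent uniforms extracted from a single
uniform `x ∈ [0,1)` by digit interleaving. -/
noncomputable def unif (i : ℕ) (x : ℝ) : ℝ :=
  ∑' k : ℕ, if digit (Nat.pair i k) x then ((2 : ℝ) ^ (k + 1))⁻¹ else 0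

/-- The coordinates of the Bernoulli(`p`) product: coordinate `i` is `true`
("open") iff the `i`-th extracted uniform is `< p`. -/
noncomputable def coords (ι : Type) [Countable ι] (p : ℝ) (x : ℝ) : ι → Bool :=
  letI : Encodable ι := Encodable.ofCountable ι
  fun i => decide (unif (Encodable.encode i) x < p)

/-- The Bernoulli(`p`) product measure on `ι → Bool`. -/
noncomputable def bernoulliProd (ι : Type) [Countable ι] (p : ℝ) :
    Measure (ι → Bool) :=
  Measure.map (coords ι p) (volume.restrict (Set.Ico (0 : ℝ) 1))

/-! ### Graphs: the class of graphs under consideration -/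

/-- A simple, nonempty, locally finite, connected graph.  (Such a graph is
automatically countable; we record countability as a field.) -/
structure SpaceGraph : Type 1 where
  V : Type
  G : SimpleGraph V
  connected : G.Connected
  locallyFinite : ∀ v : V, (G.neighborSet v).Finite
  countableV : Countable V

instance (Γ : SpaceGraph) : Countable Γ.V := Γ.countableV

/-! ### Combinatorial notions on plain simple graphs -/

/-- `u` and `v` are `k`-adjacent: `1 ≤ d_G(u,v) ≤ k`. -/
def kAdj {V : Type} (G : SimpleGraph V) (k : ℕ) (u v : V) : Prop :=
  1 ≤ G.dist u v ∧ G.dist u v ≤ k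

/-- A set of vertices is `k`-connected if it is connected under `k`-adjacency. -/
def kConnectedSet {V : Type} (G : SimpleGraph V) (k : ℕ) (A : Set V) : Prop :=
  ∀ x ∈ A, ∀ y ∈ A,
    Relation.ReflTransGen (fun a b => a ∈ A ∧ b ∈ A ∧ kAdj G k a b) x y

/-- Two distinct edges are `k`-adjacent if some endpoint of one lies at
distance at most `k` from some endpoint of the other. -/
def edgeKAdj {V : Type} (G : SimpleGraph V) (k : ℕ) (e f : Sym2 V) : Prop :=
  e ≠ f ∧ ∃ x ∈ e, ∃ y ∈ f, G.dist x y ≤ k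

/-- A set of edges is `k`-connected if it is connected under `k`-adjacency. -/
def edgeKConnectedSet {V : Type} (G : SimpleGraph V) (k : ℕ) (A : Set (Sym2 V)) : Prop :=
  ∀ e ∈ A, ∀ f ∈ A,
    Relation.ReflTransGen (fun a b => a ∈ A ∧ b ∈ A ∧ edgeKAdj G k a b) e f

/-- `A` is a cutset between `u` and `v`: every walk from `u` to `v` meets `A`. -/
def IsCutset {V : Type} (G : SimpleGraph V) (A : Set V) (u v : V) : Prop :=
  ∀ w : G.Walk u v, ∃ x ∈ w.support, x ∈ A

/-- `A` is a minimal cutset between `u` and `v`. -/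
def IsMinCutset {V : Type} (G : SimpleGraph V) (A : Set V) (u v : V) : Prop :=
  IsCutset G A u v ∧ ∀ B : Set V, B ⊂ A → ¬IsCutset G B u v

/-- `C(G) ≤ k`: every minimal cutset between two vertices is `k`-connected. -/
def cutConnLe {V : Type} (G : SimpleGraph V) (k : ℕ) : Prop :=
  ∀ u v : V, ∀ A : Set V, IsMinCutset G A u v → kConnectedSet G k A

/-- `C*(G) ≤ k`: every finite minimal cutset between two vertices is `k`-connected. -/
def cutConnStarLe {V : Type} (G : SimpleGraph V) (k : ℕ) : Prop :=
  ∀ u v : V, ∀ A : Set V, A.Finite → IsMinCutset G A u v → kConnectedSet G k A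

/-- `A` is a bond-cutset between `u` and `v`: a set of edges of `G` such that
every walk from `u` to `v` uses an edge of `A`. -/
def IsBondCutset {V : Type} (G : SimpleGraph V) (A : Set (Sym2 V)) (u v : V) : Prop :=
  A ⊆ G.edgeSet ∧ ∀ w : G.Walk u v, ∃ e ∈ w.edges, e ∈ A

/-- `A` is a minimal bond-cutset between `u` and `v`. -/
def IsMinBondCutset {V : Type} (G : SimpleGraph V) (A : Set (Sym2 V)) (u v : V) : Prop :=
  IsBondCutset G A u v ∧ ∀ B : Set (Sym2 V), B ⊂ A → ¬IsBondCutset G B u v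

/-- `C_E(G) ≤ k`: every minimal bond-cutset between two vertices is `k`-connected. -/
def edgeCutConnLe {V : Type} (G : SimpleGraph V) (k : ℕ) : Prop :=
  ∀ u v : V, ∀ A : Set (Sym2 V), IsMinBondCutset G A u v → edgeKConnectedSet G k A

/-- `C*_E(G) ≤ k`: every finite minimal bond-cutset between two vertices is
`k`-connected. -/
def edgeCutConnStarLe {V : Type} (G : SimpleGraph V) (k : ℕ) : Prop :=
  ∀ u v : V, ∀ A : Set (Sym2 V), A.Finite → IsMinBondCutset G A u v →
    edgeKConnectedSet G k A

/-- Reachability inside a set `S` of vertices. -/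
def reachIn {V : Type} (G : SimpleGraph V) (S : Set V) : V → V → Prop :=
  Relation.ReflTransGen fun a b => a ∈ S ∧ b ∈ S ∧ G.Adj a b

/-- There is a path from `x` to `y` all of whose vertices lie in `S`. -/
def pathIn {V : Type} (G : SimpleGraph V) (S : Set V) (x y : V) : Prop :=
  x ∈ S ∧ reachIn G S x y

/-- The connected component of `u` of the subgraph induced on `S`. -/
def compIn {V : Type} (G : SimpleGraph V) (S : Set V) (u : V) : Set V :=
  {v | pathIn G S u v}

/-- `G` is one-ended: for every finite set `F` of vertices, the complement of
`F` has exactly one infinite connected component. -/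
def OneEnded {V : Type} (G : SimpleGraph V) : Prop :=
  ∀ F : Set V, F.Finite →
    ∃ u, u ∉ F ∧ (compIn G Fᶜ u).Infinite ∧
      ∀ v, v ∉ F → (compIn G Fᶜ v).Infinite → pathIn G Fᶜ u v

/-- The outer vertex boundary `∂_V A`: vertices not in `A` adjacent to `A`. -/
def vertexBoundary {V : Type} (G : SimpleGraph V) (A : Set V) : Set V :=
  {v | v ∉ A ∧ ∃ u ∈ A, G.Adj u v}

/-- A fibration: a 1-Lipschitz map along which every edge at the image of `x`
lifts to an edge at `x`. -/
def IsFibration {V W : Type} (GrL : SimpleGraph V) (GrS : SimpleGraph W)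
    (pr : V → W) : Prop :=
  (∀ x y : V, GrS.dist (pr x) (pr y) ≤ GrL.dist x y) ∧
  (∀ (x : V) (v : W), GrS.Adj (pr x) v → ∃ y : V, GrL.Adj x y ∧ pr y = v)

/-- `φ` is an `A`-quasi-isometry. -/
def IsQI {V W : Type} (A : ℝ) (G : SimpleGraph V) (H : SimpleGraph W)
    (φ : V → W) : Prop :=
  (∀ x y : V, (1 / A) * (G.dist x y : ℝ) - A ≤ (H.dist (φ x) (φ y) : ℝ) ∧
      (H.dist (φ x) (φ y) : ℝ) ≤ A * (G.dist x y : ℝ) + A) ∧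
  (∀ z : W, ∃ x : V, (H.dist z (φ x) : ℝ) ≤ A)

/-- `G` and `H` are `A`-quasi-isometric (with `A`-quasi-inverse maps). -/
def QuasiIsometric {V W : Type} (A : ℝ) (G : SimpleGraph V) (H : SimpleGraph W) : Prop :=
  ∃ (φ : V → W) (ψ : W → V), IsQI A G H φ ∧ IsQI A H G ψ ∧
    (∀ x : V, (G.dist (ψ (φ x)) x : ℝ) ≤ A) ∧
    (∀ z : W, (H.dist (φ (ψ z)) z : ℝ) ≤ A)

/-! ### Balls, transitivity, the class `𝔊`, and the local topology -/

/-- The ball of radius `r` around `o`. -/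
def ball (Γ : SpaceGraph) (o : Γ.V) (r : ℕ) : Set Γ.V := {v | Γ.G.dist o v ≤ r}

/-- The sphere of radius `r` around `o`. -/
def sphere (Γ : SpaceGraph) (o : Γ.V) (r : ℕ) : Set Γ.V := {v | Γ.G.dist o v = r}

/-- `Γ` is (vertex-)transitive. -/
def IsTransitive (Γ : SpaceGraph) : Prop :=
  ∀ u v : Γ.V, ∃ φ : Γ.G ≃g Γ.G, φ u = v

/-- Membership in the class `𝔊`: transitive, superlinear growth, and
polynomial growth. -/
def InPolyClass (Γ : SpaceGraph) : Prop :=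
  IsTransitive Γ ∧
  (∀ (o : Γ.V) (K : ℕ), ∃ R : ℕ, ∀ r : ℕ, R ≤ r → K * r ≤ (ball Γ o r).ncard) ∧
  (∃ C d : ℕ, ∀ (o : Γ.V) (r : ℕ), 1 ≤ r → (ball Γ o r).ncard ≤ C * r ^ d)

lemma self_mem_ball (Γ : SpaceGraph) (o : Γ.V) (r : ℕ) : o ∈ ball Γ o r := by
  simp [ball, SimpleGraph.dist_self]

/-- The rooted balls of radius `r` in `Γ` (around `o`) and `Δ` (around `o'`)
are isomorphic, by an isomorphism matching the roots. -/
def rootedBallIso (Γ Δ : SpaceGraph) (o : Γ.V) (o' : Δ.V) (r : ℕ) : Prop :=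
  ∃ φ : Γ.G.induce (ball Γ o r) ≃g Δ.G.induce (ball Δ o' r),
    φ ⟨o, self_mem_ball Γ o r⟩ = ⟨o', self_mem_ball Δ o' r⟩

/-- `R(Γ,Δ) ≥ r`: the `r`-balls of `Γ` and `Δ` are isomorphic as rooted graphs. -/
def RGe (Γ Δ : SpaceGraph) (r : ℕ) : Prop :=
  ∃ (o : Γ.V) (o' : Δ.V), rootedBallIso Γ Δ o o' r

/-! ### Bernoulli percolation -/

/-- The probability of the event `A` under Bernoulli(`p`) bond percolation on `Γ`.
(Configurations assign a state to every element of `Sym2 Γ.V`; only the states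
of actual edges matter for the events considered.) -/
noncomputable def prob (Γ : SpaceGraph) (p : ℝ) (A : Set (Sym2 Γ.V → Bool)) : ℝ :=
  (bernoulliProd (Sym2 Γ.V) p A).toReal

/-- The probability of the event `A`, as an extended nonnegative real. -/
noncomputable def probNN (Γ : SpaceGraph) (p : ℝ) (A : Set (Sym2 Γ.V → Bool)) : ℝ≥0∞ :=
  bernoulliProd (Sym2 Γ.V) p A

/-- `u` and `v` are adjacent and the edge between them is open in `ω`. -/
def openAdj (Γ : SpaceGraph) (ω : Sym2 Γ.V → Bool) (u v : Γ.V) : Prop :=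
  Γ.G.Adj u v ∧ ω s(u, v) = true

/-- `u` and `v` are connected by an open path in `ω`. -/
def Conn (Γ : SpaceGraph) (ω : Sym2 Γ.V → Bool) (u v : Γ.V) : Prop :=
  Relation.ReflTransGen (openAdj Γ ω) u v

/-- The (open) cluster of `u` in `ω`. -/
def cluster (Γ : SpaceGraph) (ω : Sym2 Γ.V → Bool) (u : Γ.V) : Set Γ.V :=
  {v | Conn Γ ω u v}

/-- `θ_Γ(p)` with root `o` (independent of `o` for transitive graphs). -/
noncomputable def theta (Γ : SpaceGraph) (o : Γ.V) (p : ℝ) : ℝ :=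
  prob Γ p {ω | (cluster Γ ω o).Infinite}

/-- The critical parameter `p_c(Γ)` (with root `o`). -/
noncomputable def pc (Γ : SpaceGraph) (o : Γ.V) : ℝ :=
  sInf ({1} ∪ {p : ℝ | p ∈ Set.Icc (0 : ℝ) 1 ∧ 0 < theta Γ o p})


/-! ### Good and bad vertices, interfaces -/

/-- Open connectivity using only vertices of `S`. -/
def ConnIn (Γ : SpaceGraph) (ω : Sym2 Γ.V → Bool) (S : Set Γ.V) (u v : Γ.V) : Prop :=
  Relation.ReflTransGen (fun a b => a ∈ S ∧ b ∈ S ∧ openAdj Γ ω a b) u v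

/-- The uniqueness event `U(m,n,x)`: at most one cluster of `ω` restricted to
`B(x,n)` intersects both `B(x,m)` and `S(x,n)`. -/
def UEvent (Γ : SpaceGraph) (ω : Sym2 Γ.V → Bool) (m n : ℕ) (x : Γ.V) : Prop :=
  ∀ a b a' b' : Γ.V, a ∈ ball Γ x m → b ∈ sphere Γ x n →
    a' ∈ ball Γ x m → b' ∈ sphere Γ x n →
    ConnIn Γ ω (ball Γ x n) a b → ConnIn Γ ω (ball Γ x n) a' b' →
    ConnIn Γ ω (ball Γ x n) a a'

/-- `x` is `N`-good in `ω`. -/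
def NGood (Γ : SpaceGraph) (ω : Sym2 Γ.V → Bool) (N : ℕ) (x : Γ.V) : Prop :=
  ∀ z : Γ.V, (z = x ∨ Γ.G.Adj x z) →
    (∃ a ∈ ball Γ z N, ∃ b ∈ sphere Γ z (10 * N), Conn Γ ω a b) ∧
      UEvent Γ ω (2 * N) (5 * N) z

/-- `x` is `N`-bad in `ω`. -/
def NBad (Γ : SpaceGraph) (ω : Sym2 Γ.V → Bool) (N : ℕ) (x : Γ.V) : Prop :=
  ¬NGood Γ ω N x

/-- `C_x^bad(N)`: the `t`-connected component of `x` within the `N`-bad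
vertices (empty if `x` is `N`-good). -/
def badComp (Γ : SpaceGraph) (ω : Sym2 Γ.V → Bool) (N t : ℕ) (x : Γ.V) : Set Γ.V :=
  {y | NBad Γ ω N x ∧
    Relation.ReflTransGen (fun a b => NBad Γ ω N a ∧ NBad Γ ω N b ∧ kAdj Γ.G t a b) x y}

/-- `C_o(N)`: the set of vertices within distance `N` of the cluster of `o`. -/
def clusterNbhd (Γ : SpaceGraph) (ω : Sym2 Γ.V → Bool) (o : Γ.V) (N : ℕ) : Set Γ.V :=
  {v | ∃ u ∈ cluster Γ ω o, Γ.G.dist v u ≤ N}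

/-- The exposed boundary `∂A`: vertices of `A` adjacent to an infinite
connected component of the complement of `A`. -/
def exposedBoundary (Γ : SpaceGraph) (A : Set Γ.V) : Set Γ.V :=
  {v | v ∈ A ∧ ∃ w, w ∉ A ∧ Γ.G.Adj v w ∧ (compIn Γ.G Aᶜ w).Infinite}

/-- An interface (relative to the root `o` and the connectivity constant `t`):
a finite `t`-connected set of vertices containing `o` or surrounding `o`. -/
def IsInterface (Γ : SpaceGraph) (o : Γ.V) (t : ℕ) (I : Finset Γ.V) : Prop :=
  kConnectedSet Γ.G t (↑I : Set Γ.V) ∧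
    (o ∈ I ∨ (o ∉ I ∧ (compIn Γ.G ((↑I : Set Γ.V))ᶜ o).Finite))

/-- The set of vertices within distance `r` of `I`. -/
def interfaceNbhd (Γ : SpaceGraph) (I : Finset Γ.V) (r : ℕ) : Set Γ.V :=
  {v | ∃ y ∈ I, Γ.G.dist v y ≤ r}

/-- The interface `I` occurs in `ω` at scale `N`: all its vertices are `N`-bad,
all vertices at distance between `1` and `t` from it are `N`-good, and the
closed edges with both endpoints within distance `5N` of `I` form a
bond-cutset between `o` and infinity. -/
def InterfaceOccurs (Γ : SpaceGraph) (o : Γ.V) (t N : ℕ) (ω : Sym2 Γ.V → Bool)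
    (I : Finset Γ.V) : Prop :=
  (∀ x ∈ I, NBad Γ ω N x) ∧
  (∀ x : Γ.V, x ∉ I → (∃ y ∈ I, Γ.G.dist x y ≤ t) → NGood Γ ω N x) ∧
  (∀ f : ℕ → Γ.V, f 0 = o → Function.Injective f →
    (∀ n : ℕ, Γ.G.Adj (f n) (f (n + 1))) →
    ∃ n : ℕ, ω s(f n, f (n + 1)) = false ∧
      f n ∈ interfaceNbhd Γ I (5 * N) ∧ f (n + 1) ∈ interfaceNbhd Γ I (5 * N))

/-- A multi-interface: a finite nonempty collection of pairwise disjoint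
interfaces. -/
def IsMultiInterface (Γ : SpaceGraph) (o : Γ.V) (t : ℕ)
    (M : Finset (Finset Γ.V)) : Prop :=
  M.Nonempty ∧ (∀ I ∈ M, IsInterface Γ o t I) ∧
    ∀ I ∈ M, ∀ J ∈ M, I ≠ J → Disjoint I J

/-- The size of a multi-interface. -/
def multiSize {α : Type} (M : Finset (Finset α)) : ℕ := ∑ I ∈ M, I.card

/-- The multi-interface `M` occurs in `ω` at scale `N`. -/
def MultiOccurs (Γ : SpaceGraph) (o : Γ.V) (t N : ℕ) (ω : Sym2 Γ.V → Bool)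
    (M : Finset (Finset Γ.V)) : Prop :=
  ∀ I ∈ M, InterfaceOccurs Γ o t N ω I

/-! ### Growth degree and dimension -/

/-- `Γ` has growth of degree at most `d`. -/
def growthLe (Γ : SpaceGraph) (d : ℕ) : Prop :=
  ∃ C : ℕ, ∀ (o : Γ.V) (r : ℕ), 1 ≤ r → (ball Γ o r).ncard ≤ C * r ^ d

/-- The dimension of a graph of polynomial growth: the least degree `d` of a
polynomial upper bound on the growth. -/
noncomputable def dimen (Γ : SpaceGraph) : ℕ := sInf {d | growthLe Γ d}

/-! ### Cayley graphs and products of cycle-graphs -/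

/-- The Cayley graph of a group `K` with respect to a (symmetrized) set `T`. -/
def cayley (K : Type) [Group K] (T : Set K) : SimpleGraph K where
  Adj g h := g ≠ h ∧ (g⁻¹ * h ∈ T ∨ h⁻¹ * g ∈ T)
  symm := by
    refine ⟨?_⟩
    rintro g h ⟨hgh, hmem⟩
    exact ⟨hgh.symm, hmem.symm⟩
  loopless := ⟨fun g h => h.1 rfl⟩

/-- A finitely generated group is one-ended if all of its Cayley graphs with
respect to finite generating sets are one-ended. -/
def GroupOneEnded (K : Type) [Group K] : Prop :=
  ∀ T : Set K, T.Finite → Subgroup.closure T = ⊤ → OneEnded (cayley K T)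

/-- The box product of a finite family of graphs. -/
def boxProd {m : ℕ} (Vf : Fin m → Type) (Gf : ∀ i, SimpleGraph (Vf i)) :
    SimpleGraph (∀ i, Vf i) where
  Adj a b := ∃ i, (Gf i).Adj (a i) (b i) ∧ ∀ j, j ≠ i → a j = b j
  symm := by
    refine ⟨?_⟩
    rintro a b ⟨i, hadj, h⟩
    exact ⟨i, hadj.symm, fun j hj => (h j hj).symm⟩
  loopless := by
    refine ⟨?_⟩
    rintro a ⟨i, hadj, -⟩
    exact (Gf i).loopless.irrefl _ hadj

/-- Membership in the class `𝔄`: products of finitely many cycle-graphs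
(connected graphs in which every vertex has degree 2), at least two of which
are infinite. -/
def InA (Γ : SpaceGraph) : Prop :=
  ∃ (m : ℕ) (Vf : Fin m → Type) (Gf : ∀ i, SimpleGraph (Vf i)),
    (∀ i, (Gf i).Connected) ∧
    (∀ (i : Fin m) (v : Vf i), ((Gf i).neighborSet v).ncard = 2) ∧
    (∃ i j : Fin m, i ≠ j ∧ Infinite (Vf i) ∧ Infinite (Vf j)) ∧
    Nonempty (Γ.G ≃g boxProd Vf Gf)

/-! By one-endedness and local finiteness, the complement of the infinite component `K` of `Fᶜ`
is finite, so the hypothesis applied to `Kᶜ` yields a vertex `u₀`, necessarily in `K`, whose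
fibre is connected inside `π⁻¹(K)`. Lifting paths of `K` along the fibration joins every vertex of
`π⁻¹(K)` to that fibre without leaving `π⁻¹(K)`. -/

section Reach

variable {V : Type} {G : SimpleGraph V} {S : Set V} {u a b : V}

lemma reachIn_symm (h : reachIn G S a b) : reachIn G S b a := by
  induction h with
  | refl => exact .refl
  | tail _ step ih => exact .head ⟨step.2.1, step.1, step.2.2.symm⟩ ih

lemma reachIn_univ_iff : reachIn G univ a b ↔ G.Reachable a b := by
  simp only [reachIn, mem_univ, true_and, SimpleGraph.reachable_iff_reflTransGen]

lemma mem_compIn_of_reachIn (ha : a ∈ compIn G S u) (hab : reachIn G S a b) :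
    b ∈ compIn G S u :=
  ⟨ha.1, ha.2.trans hab⟩

lemma reachIn_compIn_of_mem (ha : a ∈ compIn G S u) (hb : b ∈ compIn G S u) :
    reachIn G (compIn G S u) a b := by
  have hab : reachIn G S a b := (reachIn_symm ha.2).trans hb.2
  induction hab with
  | refl => exact .refl
  | @tail c d hac step ih =>
    exact (ih (mem_compIn_of_reachIn ha hac)).tail
      ⟨mem_compIn_of_reachIn ha hac, mem_compIn_of_reachIn ha (hac.tail step), step.2.2⟩

end Reach

section Ends

variable {V : Type} {G : SimpleGraph V} {F : Set V} {u v w : V}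

lemma vertexBoundary_finite (hlf : ∀ v, (G.neighborSet v).Finite) (hF : F.Finite) :
    (vertexBoundary G F).Finite :=
  (hF.biUnion fun f _ => hlf f).subset fun _ ⟨_, _, hf, hadj⟩ => mem_biUnion hf hadj

lemma reachIn_or_exists_vertexBoundary (p : G.Walk v u) (hv : v ∉ F) :
    reachIn G Fᶜ v u ∨ ∃ w ∈ vertexBoundary G F, reachIn G Fᶜ v w := by
  induction p with
  | nil => exact .inl .refl
  | @cons v b u hadj p ih =>
    by_cases hb : b ∈ F
    · exact .inr ⟨v, ⟨hv, b, hb, hadj.symm⟩, .refl⟩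
    · rcases ih hb with h | ⟨w, hw, h⟩
      · exact .inl (.head ⟨hv, hb, hadj⟩ h)
      · exact .inr ⟨w, hw, .head ⟨hv, hb, hadj⟩ h⟩

lemma OneEnded.mem_compIn_of_infinite (hone : OneEnded G) (hF : F.Finite) (hu : u ∉ F)
    (hu' : (compIn G Fᶜ u).Infinite) (hw : w ∉ F) (hw' : (compIn G Fᶜ w).Infinite) :
    w ∈ compIn G Fᶜ u := by
  obtain ⟨c, -, -, hc⟩ := hone F hF
  exact ⟨hu, (reachIn_symm (hc u hu hu').2).trans (hc w hw hw').2⟩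

/-- Every vertex outside `F` and outside the component `K` of `u` lies in a component of `Fᶜ`
through the boundary of `F`, and those components other than `K` are finite. -/
lemma OneEnded.finite_compl_compIn (hone : OneEnded G) (hconn : G.Preconnected)
    (hlf : ∀ v, (G.neighborSet v).Finite) (hF : F.Finite) (hu : u ∉ F)
    (hinf : (compIn G Fᶜ u).Infinite) : (compIn G Fᶜ u)ᶜ.Finite := by
  set K := compIn G Fᶜ u
  have hcover : Kᶜ ⊆ F ∪ ⋃ w ∈ vertexBoundary G F \ K, compIn G Fᶜ w := by
    intro v hvK
    by_cases hvF : v ∈ F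
    · exact .inl hvF
    rcases reachIn_or_exists_vertexBoundary (hconn v u).some hvF with h | ⟨w, hw, h⟩
    · exact absurd ⟨hu, reachIn_symm h⟩ hvK
    · have hwK : w ∉ K := fun hwK => hvK (mem_compIn_of_reachIn hwK (reachIn_symm h))
      exact .inr (mem_biUnion ⟨hw, hwK⟩ ⟨hw.1, reachIn_symm h⟩)
  refine (hF.union ((vertexBoundary_finite hlf hF).sdiff.biUnion fun w hw => ?_)).subset hcover
  by_contra hw'
  exact hw.2 (hone.mem_compIn_of_infinite hF hu hinf hw.1.1 hw')

end Ends

section Fibration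

variable {V W : Type} {GrL : SimpleGraph V} {GrS : SimpleGraph W} {pr : V → W}

lemma IsFibration.exists_lift_of_reachIn (hfib : IsFibration GrL GrS pr) {S : Set W} {w w' : W}
    (hww' : reachIn GrS S w w') {x : V} (hx : pr x = w) :
    ∃ y, pr y = w' ∧ reachIn GrL (pr ⁻¹' S) x y := by
  induction hww' with
  | refl => exact ⟨x, hx, .refl⟩
  | @tail b c _ step ih =>
    obtain ⟨y, hy, hxy⟩ := ih
    obtain ⟨z, hyz, hz⟩ := hfib.2 y c (hy ▸ step.2.2)
    exact ⟨z, hz, hxy.tail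
      ⟨show pr y ∈ S from hy ▸ step.1, show pr z ∈ S from hz ▸ step.2.1, hyz⟩⟩

lemma IsFibration.exists_preimage (hfib : IsFibration GrL GrS pr) (hS : GrS.Preconnected)
    (x : V) (w : W) : ∃ y, pr y = w :=
  (hfib.exists_lift_of_reachIn (reachIn_univ_iff.2 (hS (pr x) w)) rfl).imp fun _ => And.left

lemma IsFibration.pathIn_preimage (hfib : IsFibration GrL GrS pr) {T : Set W}
    (hT : ∀ a ∈ T, ∀ b ∈ T, reachIn GrS T a b) {w₀ : W} (hw₀ : w₀ ∈ T)
    (hfiber : ∀ x y, pr x = w₀ → pr y = w₀ → reachIn GrL (pr ⁻¹' T) x y)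
    {x y : V} (hx : pr x ∈ T) (hy : pr y ∈ T) : pathIn GrL (pr ⁻¹' T) x y := by
  obtain ⟨x₀, hx₀, hxx₀⟩ := hfib.exists_lift_of_reachIn (hT _ hx w₀ hw₀) rfl
  obtain ⟨y₀, hy₀, hyy₀⟩ := hfib.exists_lift_of_reachIn (hT _ hy w₀ hw₀) rfl
  exact ⟨hx, (hxx₀.trans (hfiber x₀ y₀ hx₀ hy₀)).trans (reachIn_symm hyy₀)⟩

end Fibration

theorem fibration_preimage_connected_general
    {V W : Type} (GrL : SimpleGraph V) (GrS : SimpleGraph W)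
    (hSconn : GrS.Connected)
    (hlfS : ∀ w : W, (GrS.neighborSet w).Finite)
    (pr : V → W) (hfib : IsFibration GrL GrS pr)
    (hone : OneEnded GrS)
    (h : ∀ F : Set W, F.Finite → ∃ u : W,
      ∀ x y : V, pr x = u → pr y = u → pathIn GrL (pr ⁻¹' F)ᶜ x y) :
    ∀ F : Set W, F.Finite → ∀ u : W, u ∉ F → (compIn GrS Fᶜ u).Infinite →
      ∀ x y : V, x ∈ pr ⁻¹' (compIn GrS Fᶜ u) → y ∈ pr ⁻¹' (compIn GrS Fᶜ u) →
        pathIn GrL (pr ⁻¹' (compIn GrS Fᶜ u)) x y := by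
  intro F hF u hu hinf x y hx hy
  set K := compIn GrS Fᶜ u
  obtain ⟨u₀, hu₀⟩ := h Kᶜ (hone.finite_compl_compIn hSconn.preconnected hlfS hF hu hinf)
  obtain ⟨z, hz⟩ := hfib.exists_preimage hSconn.preconnected x u₀
  have hu₀K : u₀ ∈ K := by simpa [hz] using (hu₀ z z hz hz).1
  refine hfib.pathIn_preimage (fun a ha b hb => reachIn_compIn_of_mem ha hb) hu₀K
    (fun a b ha hb => ?_) hx hy
  simpa only [preimage_compl, compl_compl] using (hu₀ a b ha hb).2

/-- Lemma: verifying the connectivity assumption of the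
fibration proposition.  If `π` is a fibration, `𝓢` is one-ended and for every
finite `F ⊆ V(𝓢)` there is a vertex `u` of `𝓢` such that any two vertices of
`π⁻¹({u})` can be joined in `𝓛` by a path avoiding `π⁻¹(F)`, then for every
finite `F ⊆ V(𝓢)` the subgraph of `𝓛` induced on the preimage of the infinite
component of the complement of `F` is connected. -/
theorem fibration_preimage_connected
    {V W : Type} (GrL : SimpleGraph V) (GrS : SimpleGraph W)
    (hneL : Nonempty V) (hneS : Nonempty W)
    (hLconn : GrL.Connected) (hSconn : GrS.Connected)
    (hlfL : ∀ v : V, (GrL.neighborSet v).Finite)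
    (hlfS : ∀ w : W, (GrS.neighborSet w).Finite)
    (pr : V → W) (hfib : IsFibration GrL GrS pr)
    (hone : OneEnded GrS)
    (h : ∀ F : Set W, F.Finite → ∃ u : W,
      ∀ x y : V, pr x = u → pr y = u → pathIn GrL (pr ⁻¹' F)ᶜ x y) :
    ∀ F : Set W, F.Finite → ∀ u : W, u ∉ F → (compIn GrS Fᶜ u).Infinite →
      ∀ x y : V, x ∈ pr ⁻¹' (compIn GrS Fᶜ u) → y ∈ pr ⁻¹' (compIn GrS Fᶜ u) →
        pathIn GrL (pr ⁻¹' (compIn GrS Fᶜ u)) x y :=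
  fibration_preimage_connected_general GrL GrS hSconn hlfS pr hfib hone h

end PercPaper
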